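/- In coordinates (s,t,u,v,w) on the free 3-step nilpotent group G on X,Y, if g = (1,1,u,v,w) and τ ∈ [0,1], then the element g(X^{1-τ}, Y)·X^τ (obtained by rescaling all X-exponents in a representing word by (1-τ) and right-multiplying by X^τ) has coordinates (1, 1, (1-τ)u − τ, (1-τ)²v − 3τ(1-τ)u + τ(2τ−1), (1-τ)w + τ). -/

import Mathlib

/-- The free 3-step nilpotent Lie algebra on two generators, in coordinates with
respect to the basis `X, Y, (1/2)[X,Y], (1/12)[X,[X,Y]], (1/12)[Y,[Y,X]]`. -/
abbrev G5 : Type := ℝ × ℝ × ℝ × ℝ × ℝ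

/-- The Lie bracket in these coordinates. -/
noncomputable def br (a b : G5) : G5 :=
  (0, 0, 2 * (a.1 * b.2.1 - a.2.1 * b.1), 6 * (a.1 * b.2.2.1 - a.2.2.1 * b.1),
    -6 * (a.2.1 * b.2.2.1 - a.2.2.1 * b.2.1))

/-- The group law given by the truncated BCH formula. -/
noncomputable def gmul (a b : G5) : G5 :=
  a + b + (1/2 : ℝ) • br a b + (1/12 : ℝ) • br a (br a b) + (1/12 : ℝ) • br b (br b a)

noncomputable def Xg : G5 := (1, 0, 0, 0, 0)

noncomputable def Yg : G5 := (0, 1, 0, 0, 0)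

/-- The value of the word `X^{s₁} Y^{t₁} ⋯ X^{s_N} Y^{t_N}` encoded by a list of
pairs of exponents. -/
noncomputable def wordProd (l : List (ℝ × ℝ)) : G5 :=
  l.foldl (fun g p => gmul (gmul g (p.1 • Xg)) (p.2 • Yg)) 0

/-- The endomorphism induced by `X ↦ λX`, `Y ↦ Y` in coordinates. -/
noncomputable def phi (lam : ℝ) (a : G5) : G5 :=
  (lam * a.1, a.2.1, lam * a.2.2.1, lam ^ 2 * a.2.2.2.1, lam * a.2.2.2.2)

lemma phi_gmul (lam : ℝ) (a b : G5) :
    phi lam (gmul a b) = gmul (phi lam a) (phi lam b) := by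
  obtain ⟨a1, a2, a3, a4, a5⟩ := a
  obtain ⟨b1, b2, b3, b4, b5⟩ := b
  simp only [gmul, br, phi, Prod.mk_add_mk, Prod.smul_mk, smul_eq_mul, Prod.mk.injEq]
  refine ⟨by ring, trivial, by ring, by ring, by ring⟩

lemma phi_smul_Xg (lam c : ℝ) : phi lam (c • Xg) = (lam * c) • Xg := by
  simp only [phi, Xg, Prod.smul_mk, smul_eq_mul, Prod.mk.injEq]
  refine ⟨by ring, by ring, by ring, by ring, by ring⟩

lemma phi_smul_Yg (lam c : ℝ) : phi lam (c • Yg) = c • Yg := by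
  simp only [phi, Yg, Prod.smul_mk, smul_eq_mul, Prod.mk.injEq]
  refine ⟨by ring, trivial, by ring, by ring, by ring⟩

lemma phi_zero (lam : ℝ) : phi lam (0 : G5) = 0 := by
  simp [phi, Prod.ext_iff]

lemma wordProd_map (lam : ℝ) (l : List (ℝ × ℝ)) :
    wordProd (l.map fun p => (lam * p.1, p.2)) = phi lam (wordProd l) := by
  have key : ∀ (l : List (ℝ × ℝ)) (g : G5),
      (l.map fun p => (lam * p.1, p.2)).foldl
        (fun g p => gmul (gmul g (p.1 • Xg)) (p.2 • Yg)) (phi lam g)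
      = phi lam (l.foldl (fun g p => gmul (gmul g (p.1 • Xg)) (p.2 • Yg)) g) := by
    intro l
    induction l with
    | nil => intro g; simp
    | cons p t ih =>
      intro g
      simp only [List.map_cons, List.foldl_cons]
      rw [← ih]
      congr 1
      rw [phi_gmul, phi_gmul, phi_smul_Xg, phi_smul_Yg]
  simpa [wordProd, phi_zero] using key l 0

theorem rescale_word_coords (τ : ℝ) (hτ0 : 0 ≤ τ) (hτ1 : τ ≤ 1)
    (l : List (ℝ × ℝ)) (u v w : ℝ)
    (hl : wordProd l = (1, 1, u, v, w)) :
    gmul (wordProd (l.map fun p => ((1 - τ) * p.1, p.2))) (τ • Xg) =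
      (1, 1, (1 - τ) * u - τ, (1 - τ)^2 * v - 3 * τ * (1 - τ) * u + τ * (2 * τ - 1),
        (1 - τ) * w + τ) := by
  rw [wordProd_map, hl]
  simp only [gmul, br, phi, Xg, Prod.smul_mk, smul_eq_mul, Prod.mk_add_mk, Prod.mk.injEq]
  refine ⟨by ring, by ring, by ring, by ring, by ring⟩
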